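/- arXiv:1507.02769 — 2 statements merged into one kernel-verified Lean document; each statement's English description precedes it below -/
import Mathlib

section
/- Let (𝒳ᵢ, 𝒜ᵢ, {P_{θᵢ}}), i = 1,2, be statistical models and consider the product model on 𝒳₁ × 𝒳₂ with product measures P_{θ₁} × P_{θ₂} parameterized by (θ₁, θ₂) ∈ Θ₁ × Θ₂. If Â₁ ⊆ 𝒜₁ is an MVE-algebra for the first model, then Â₁ ⊗ {∅, 𝒳₂} (i.e., Â₁ viewed inside the product σ-algebra) is an MVE-algebra for the product model. -/
open MeasureTheory ProbabilityTheory

/-- `χ` is a square-integrable unbiased estimator of zero for the family `P`. -/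
def IsUEZero {𝓧 Θ : Type*} [MeasurableSpace 𝓧] (P : Θ → Measure 𝓧) (χ : 𝓧 → ℝ) : Prop :=
  Measurable χ ∧ (∀ θ, MemLp χ 2 (P θ)) ∧ ∀ θ, ∫ x, χ x ∂P θ = 0

/-- `g` is a UMVUE: minimal variance at every `θ` among all unbiased estimators
(with finite second moments) of the same parametric function. -/
def IsUMVUE {𝓧 Θ : Type*} [MeasurableSpace 𝓧] (P : Θ → Measure 𝓧) (g : 𝓧 → ℝ) : Prop :=
  Measurable g ∧ (∀ θ, MemLp g 2 (P θ)) ∧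
    ∀ g' : 𝓧 → ℝ, Measurable g' → (∀ θ, MemLp g' 2 (P θ)) →
      (∀ θ, ∫ x, g' x ∂P θ = ∫ x, g x ∂P θ) →
      ∀ θ, variance g (P θ) ≤ variance g' (P θ)

/-- A sub-σ-algebra `𝓐` of the basic σ-algebra `m` is an MVE-algebra for the family `P`
if every `𝓐`-measurable statistic with finite second moments under every `P θ`
is a UMVUE of its expectation. -/
def IsMVEAlgebra {𝓧 Θ : Type*} [m : MeasurableSpace 𝓧] (P : Θ → Measure 𝓧)
    (𝓐 : MeasurableSpace 𝓧) : Prop :=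
  𝓐 ≤ m ∧
    ∀ g : 𝓧 → ℝ, Measurable[𝓐] g → (∀ θ, MemLp g 2 (P θ)) → @IsUMVUE 𝓧 Θ m P g

/-! A square-integrable statistic `g` is a UMVUE exactly when `∫ g χ = 0` for every unbiased
estimator of zero `χ`, because `Var[g + c χ] = Var[g] + 2 c Cov[g, χ] + c² Var[χ]`.
A statistic measurable for `𝓐₁ ⊗ {∅, 𝓧₂}` has the form `h x₁` with `h` `𝓐₁`-measurable, and by
Fubini `∫ h(x₁) χ(x₁, x₂) = ∫ h(x₁) χ̄(x₁)` where `χ̄ x₁ = ∫ χ(x₁, x₂) dP_{θ₂}` is an unbiased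
estimator of zero for the first model (square-integrable by Jensen); so it vanishes. -/

lemma sq_integral_le_integral_sq {Ω : Type*} [MeasurableSpace Ω] {μ : Measure Ω}
    [IsProbabilityMeasure μ] {X : Ω → ℝ} (hX : MemLp X 2 μ) :
    (∫ ω, X ω ∂μ) ^ 2 ≤ ∫ ω, X ω ^ 2 ∂μ := by
  have h := variance_nonneg X μ
  rw [variance_eq_sub hX] at h
  simpa [sub_nonneg] using h

section Product

variable {α β : Type*} [MeasurableSpace α] [MeasurableSpace β] {μ : Measure α} {ν : Measure β}

lemma MeasureTheory.MemLp.of_comp_fst {ε : Type*} [TopologicalSpace ε] [ContinuousENorm ε]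
    [IsProbabilityMeasure ν] {p : ENNReal} {f : α → ε} (hf : AEStronglyMeasurable f μ)
    (h : MemLp (fun x : α × β ↦ f x.1) p (μ.prod ν)) : MemLp f p μ := by
  have hmap : (μ.prod ν).map Prod.fst = μ := by simp
  rw [← hmap] at hf ⊢
  exact (memLp_map_measure_iff hf measurable_fst.aemeasurable).2 h

lemma MeasureTheory.MemLp.integral_prod_right [SFinite μ] [IsProbabilityMeasure ν]
    {f : α × β → ℝ} (hf : MemLp f 2 (μ.prod ν)) :
    MemLp (fun x ↦ ∫ y, f (x, y) ∂ν) 2 μ := by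
  have hmeas : AEStronglyMeasurable (fun x ↦ ∫ y, f (x, y) ∂ν) μ :=
    hf.aestronglyMeasurable.integral_prod_right'
  have hsq : Integrable (fun z ↦ f z ^ 2) (μ.prod ν) := hf.integrable_sq
  rw [memLp_two_iff_integrable_sq hmeas]
  refine hsq.integral_prod_left.mono' (hmeas.pow 2) ?_
  filter_upwards [hsq.prod_right_ae, hf.aestronglyMeasurable.prodMk_left] with x hx hxm
  rw [Real.norm_of_nonneg (sq_nonneg _)]
  exact sq_integral_le_integral_sq ((memLp_two_iff_integrable_sq hxm).2 hx)

lemma integral_comp_fst_mul_prod [SFinite μ] [SFinite ν] {g : α → ℝ} {f : α × β → ℝ}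
    (h : Integrable (fun z ↦ g z.1 * f z) (μ.prod ν)) :
    ∫ z, g z.1 * f z ∂(μ.prod ν) = ∫ x, g x * ∫ y, f (x, y) ∂ν ∂μ := by
  simp_rw [integral_prod _ h, integral_const_mul]

end Product

section Estimation

variable {𝓧 Θ : Type*} [MeasurableSpace 𝓧] {P : Θ → Measure 𝓧}
  [∀ θ, IsProbabilityMeasure (P θ)] {g χ : 𝓧 → ℝ}

lemma covariance_eq_integral_mul_of_integral_eq_zero {μ : Measure 𝓧} [IsProbabilityMeasure μ]
    (hg : MemLp g 2 μ) (hχ : MemLp χ 2 μ) (hχ0 : ∫ x, χ x ∂μ = 0) :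
    cov[g, χ; μ] = ∫ x, g x * χ x ∂μ := by
  simp [covariance_eq_sub hg hχ, hχ0]

lemma IsUMVUE.integral_mul_eq_zero (hg : IsUMVUE P g) (hχ : IsUEZero P χ) (θ : Θ) :
    ∫ x, g x * χ x ∂P θ = 0 := by
  obtain ⟨hgm, hgL, hmin⟩ := hg
  obtain ⟨hχm, hχL, hχ0⟩ := hχ
  set C := ∫ x, g x * χ x ∂P θ
  have hquad : ∀ c : ℝ, 0 ≤ Var[χ; P θ] * (c * c) + 2 * C * c + 0 := by
    intro c
    have hle := hmin (fun x ↦ g x + c * χ x) (hgm.add (hχm.const_mul c))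
      (fun θ' ↦ (hgL θ').add ((hχL θ').const_mul c))
      (fun θ' ↦ by
        rw [integral_add ((hgL θ').integrable one_le_two)
          (((hχL θ').integrable one_le_two).const_mul c), integral_const_mul, hχ0, mul_zero,
          add_zero]) θ
    rw [variance_fun_add (hgL θ) ((hχL θ).const_mul c), covariance_const_mul_right,
      variance_const_mul, covariance_eq_integral_mul_of_integral_eq_zero (hgL θ) (hχL θ) (hχ0 θ)]
      at hle
    linarith
  have hdisc : (2 * C) ^ 2 ≤ 0 := by simpa [discrim] using discrim_le_zero hquad
  simpa using hdisc

lemma isUMVUE_of_forall_integral_mul_eq_zero (hg : Measurable g) (hgL : ∀ θ, MemLp g 2 (P θ))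
    (horth : ∀ χ, IsUEZero P χ → ∀ θ, ∫ x, g x * χ x ∂P θ = 0) : IsUMVUE P g := by
  refine ⟨hg, hgL, fun g' hg' hg'L hmean θ ↦ ?_⟩
  have hχ : IsUEZero P (g' - g) := ⟨hg'.sub hg, fun θ ↦ (hg'L θ).sub (hgL θ), fun θ ↦ by
    rw [integral_sub' ((hg'L θ).integrable one_le_two) ((hgL θ).integrable one_le_two), hmean,
      sub_self]⟩
  have hcov : cov[g, g' - g; P θ] = 0 := by
    rw [covariance_eq_integral_mul_of_integral_eq_zero (hgL θ) (hχ.2.1 θ) (hχ.2.2 θ)]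
    exact horth _ hχ θ
  calc Var[g; P θ] ≤ Var[g; P θ] + 2 * cov[g, g' - g; P θ] + Var[g' - g; P θ] := by
        rw [hcov]; linarith [variance_nonneg (g' - g) (P θ)]
    _ = Var[g'; P θ] := by rw [← variance_add (hgL θ) (hχ.2.1 θ), add_sub_cancel]

end Estimation

lemma IsUEZero.integral_prod_right {𝓧₁ 𝓧₂ Θ₁ Θ₂ : Type*} [MeasurableSpace 𝓧₁]
    [MeasurableSpace 𝓧₂] {P₁ : Θ₁ → Measure 𝓧₁} {P₂ : Θ₂ → Measure 𝓧₂}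
    [∀ θ, IsFiniteMeasure (P₁ θ)] [∀ θ, IsProbabilityMeasure (P₂ θ)] {χ : 𝓧₁ × 𝓧₂ → ℝ}
    (hχ : IsUEZero (fun θ : Θ₁ × Θ₂ ↦ (P₁ θ.1).prod (P₂ θ.2)) χ) (θ₂ : Θ₂) :
    IsUEZero P₁ (fun x ↦ ∫ y, χ (x, y) ∂P₂ θ₂) := by
  obtain ⟨hχm, hχL, hχ0⟩ := hχ
  refine ⟨hχm.stronglyMeasurable.integral_prod_right'.measurable,
    fun θ₁ ↦ (hχL (θ₁, θ₂)).integral_prod_right, fun θ₁ ↦ ?_⟩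
  rw [← integral_prod χ ((hχL (θ₁, θ₂)).integrable one_le_two)]
  exact hχ0 (θ₁, θ₂)

theorem stmt9 {𝓧₁ 𝓧₂ Θ₁ Θ₂ : Type*}
    [m₁ : MeasurableSpace 𝓧₁] [m₂ : MeasurableSpace 𝓧₂]
    (P₁ : Θ₁ → Measure 𝓧₁) (P₂ : Θ₂ → Measure 𝓧₂)
    [∀ θ, IsProbabilityMeasure (P₁ θ)] [∀ θ, IsProbabilityMeasure (P₂ θ)]
    (𝓐₁ : MeasurableSpace 𝓧₁)
    (h₁ : @IsMVEAlgebra 𝓧₁ Θ₁ m₁ P₁ 𝓐₁) :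
    @IsMVEAlgebra (𝓧₁ × 𝓧₂) (Θ₁ × Θ₂) (@Prod.instMeasurableSpace 𝓧₁ 𝓧₂ m₁ m₂)
      (fun p : Θ₁ × Θ₂ => @MeasureTheory.Measure.prod 𝓧₁ 𝓧₂ m₁ m₂ (P₁ p.1) (P₂ p.2))
      (MeasurableSpace.comap Prod.fst 𝓐₁) := by
  -- `𝓐₁` is a local instance on `𝓧₁` too; let instance search find `m₁` instead.
  let := m₁
  obtain ⟨hle₁, hUMVUE₁⟩ := h₁
  have hle : MeasurableSpace.comap Prod.fst 𝓐₁ ≤ (inferInstance : MeasurableSpace (𝓧₁ × 𝓧₂)) :=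
    (MeasurableSpace.comap_mono hle₁).trans measurable_fst.comap_le
  refine ⟨hle, fun g hg hgL ↦ isUMVUE_of_forall_integral_mul_eq_zero (hg.mono hle le_rfl) hgL
    fun χ hχ ⟨θ₁, θ₂⟩ ↦ ?_⟩
  obtain ⟨h, hh, rfl⟩ := Measurable.exists_eq_measurable_comp (mY := 𝓐₁) hg
  have hhL : ∀ θ, MemLp h 2 (P₁ θ) := fun θ ↦
    (hgL (θ, θ₂)).of_comp_fst (hh.mono hle₁ le_rfl).aestronglyMeasurable
  rw [Function.comp_def, integral_comp_fst_mul_prod ((hgL (θ₁, θ₂)).integrable_mul (hχ.2.1 _))]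
  exact (hUMVUE₁ h hh hhL).integral_mul_eq_zero (hχ.integral_prod_right θ₂) θ₁
end

section
/- In Lehmann's example, the parametric functions possessing UMVUEs are exactly the elements of span{1, (1-θ)²}: a function g(θ) admits a UMVUE if and only if g(θ) = c₁ + c₂(1-θ)² for some constants c₁, c₂. -/
/-!
Writing `E_θ h = h(-1) θ + (1 - θ)² ∑ₙ h(n) θⁿ`, an unbiased estimator of zero `χ` satisfies
`∑ₙ χ(n) θⁿ = -χ(-1) θ / (1 - θ)² = ∑ₙ (-χ(-1) n) θⁿ` on `(0, 1)`, so by the identity theorem for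
power series `χ(x) = -χ(-1) x` on the support `{-1, 0, 1, …}`. Hence `x` spans the unbiased
estimators of zero, and they all vanish at `0`. A UMVUE `g` is uncorrelated with `x`, so `g(x) x`
has mean zero and is itself a multiple of `x`: `g` is constant on `{-1, 1, 2, …}`, with mean
`g(-1) + (g(0) - g(-1)) (1 - θ)²`. Conversely every such step function is uncorrelated with all
estimators of zero, because these vanish at `0`.
-/

open MeasureTheory

/-- The probability mass function in Lehmann's example: `X ∈ {-1,0,1,2,...}` with
`P_θ(X = -1) = θ` and `P_θ(X = k) = (1-θ)² θᵏ` for `k = 0,1,2,...`. -/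
noncomputable def lehmannP (θ : ℝ) (x : ℤ) : ℝ :=
  if x = -1 then θ else if 0 ≤ x then (1 - θ) ^ 2 * θ ^ x.toNat else 0

/-- `χ` is a square-integrable unbiased estimator of zero in Lehmann's example. -/
def IsUEZeroLehmann (χ : ℤ → ℝ) : Prop :=
  ∀ θ ∈ Set.Ioo (0 : ℝ) 1,
    Summable (fun x : ℤ => (χ x) ^ 2 * lehmannP θ x) ∧
    Summable (fun x : ℤ => χ x * lehmannP θ x) ∧
    ∑' x : ℤ, χ x * lehmannP θ x = 0

open Filter Topology

theorem eq_zero_of_tsum_mul_pow_eq_zero_on_Ioo {a : ℕ → ℝ} {r : ℝ} (hr : 0 < r)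
    (hs : ∀ x ∈ Set.Ioo 0 r, Summable fun n => a n * x ^ n)
    (h0 : ∀ x ∈ Set.Ioo 0 r, ∑' n, a n * x ^ n = 0) : a = 0 := by
  set p := FormalMultilinearSeries.ofScalars ℝ a
  have hradius : 0 < p.radius := by
    have hρ : r / 2 ∈ Set.Ioo 0 r := ⟨by positivity, by linarith⟩
    refine lt_of_lt_of_le ?_ (p.le_radius_of_summable_norm (r := (r / 2).toNNReal) ?_)
    · simpa using hr
    · simpa [p, FormalMultilinearSeries.ofScalars_norm, abs_of_pos hr, hρ.1.le] using (hs _ hρ).norm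
  have hp := p.hasFPowerSeriesOnBall hradius
  -- the sum vanishes on a right neighbourhood of `0`, hence near `0` by the identity theorem
  have hzero : ∀ᶠ x in 𝓝 0, p.sum x = 0 := by
    refine hp.analyticAt.frequently_zero_iff_eventually_zero.1 ?_
    have : ∀ᶠ x in 𝓝[>] (0 : ℝ), p.sum x = 0 := mem_of_superset (Ioo_mem_nhdsGT hr)
      fun x hx => (FormalMultilinearSeries.ofScalars_sum_eq a x).trans (h0 x hx)
    exact this.frequently.filter_mono (nhdsGT_le_nhdsNE 0)
  exact (FormalMultilinearSeries.ofScalars_series_eq_zero ℝ).1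
    (hp.hasFPowerSeriesAt.congr hzero).eq_zero

theorem summable_mul_mul_of_summable_sq {ι : Type*} {u v w : ι → ℝ} (hw : ∀ i, 0 ≤ w i)
    (hu : Summable fun i => u i ^ 2 * w i) (hv : Summable fun i => v i ^ 2 * w i) :
    Summable fun i => u i * v i * w i := by
  refine Summable.of_norm_bounded ((hu.add hv).div_const 2) fun i => ?_
  rw [Real.norm_eq_abs, abs_mul, abs_mul, abs_of_nonneg (hw i), ← add_mul, mul_div_right_comm]
  refine mul_le_mul_of_nonneg_right ?_ (hw i)
  nlinarith [sq_nonneg (|u i| - |v i|), sq_abs (u i), sq_abs (v i)]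

section Lehmann

variable {θ : ℝ}

theorem lehmannP_neg_one (θ : ℝ) : lehmannP θ (-1) = θ := by simp [lehmannP]

theorem lehmannP_natCast (θ : ℝ) (n : ℕ) : lehmannP θ n = (1 - θ) ^ 2 * θ ^ n := by
  simp [lehmannP, show (n : ℤ) ≠ -1 by omega]

theorem lehmannP_of_lt_neg_one (θ : ℝ) {x : ℤ} (hx : x < -1) : lehmannP θ x = 0 := by
  simp [lehmannP, hx.ne, show ¬ 0 ≤ x by omega]

theorem lehmannP_nonneg (hθ : 0 ≤ θ) (x : ℤ) : 0 ≤ lehmannP θ x := by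
  unfold lehmannP
  split_ifs
  · exact hθ
  · exact mul_nonneg (sq_nonneg _) (pow_nonneg hθ _)
  · rfl

theorem lehmannP_neg_add_one (θ : ℝ) (n : ℕ) :
    lehmannP θ (-(n + 1)) = if n = 0 then θ else 0 := by
  split_ifs with hn
  · simp [hn, lehmannP_neg_one]
  · exact lehmannP_of_lt_neg_one θ (by omega)

theorem hasSum_mul_lehmannP {h : ℤ → ℝ} {s : ℝ} (hs : HasSum (fun n : ℕ => h n * θ ^ n) s) :
    HasSum (fun x => h x * lehmannP θ x) (h (-1) * θ + (1 - θ) ^ 2 * s) := by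
  rw [add_comm]
  refine HasSum.of_nat_of_neg_add_one ?_ ?_
  · simpa only [lehmannP_natCast, mul_left_comm] using hs.mul_left ((1 - θ) ^ 2)
  · convert hasSum_ite_eq 0 (h (-1) * θ) using 2 with n
    rw [lehmannP_neg_add_one]
    split_ifs with hn <;> simp [hn]

theorem summable_mul_lehmannP_iff {h : ℤ → ℝ} (hθ : θ ≠ 1) :
    Summable (fun x => h x * lehmannP θ x) ↔ Summable (fun n : ℕ => h n * θ ^ n) := by
  have hneg : Summable fun n : ℕ => h (-(n + 1)) * lehmannP θ (-(n + 1)) :=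
    summable_of_ne_finset_zero (s := {0}) fun n hn => by
      rw [lehmannP_neg_add_one, if_neg (Finset.mem_singleton.not.1 hn), mul_zero]
  rw [summable_int_iff_summable_nat_and_neg_add_zero, and_iff_left hneg]
  simp only [lehmannP_natCast, mul_left_comm _ ((1 - θ) ^ 2)]
  exact summable_mul_left_iff (pow_ne_zero 2 (sub_ne_zero.2 hθ.symm))

theorem apply_natCast_eq_of_tsum_mul_lehmannP_eq_zero {h : ℤ → ℝ}
    (hs : ∀ θ ∈ Set.Ioo (0 : ℝ) 1, Summable fun x => h x * lehmannP θ x)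
    (h0 : ∀ θ ∈ Set.Ioo (0 : ℝ) 1, ∑' x, h x * lehmannP θ x = 0) (n : ℕ) :
    h n = -(n * h (-1)) := by
  have hseries :
      ∀ θ ∈ Set.Ioo (0 : ℝ) 1, HasSum (fun n : ℕ => (h n + n * h (-1)) * θ ^ n) 0 := by
    intro θ hθ
    have hnorm : ‖θ‖ < 1 := by rw [Real.norm_of_nonneg hθ.1.le]; exact hθ.2
    have hsum := ((summable_mul_lehmannP_iff hθ.2.ne).1 (hs θ hθ)).hasSum
    have hmean := (hasSum_mul_lehmannP hsum).tsum_eq.symm.trans (h0 θ hθ)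
    have := hsum.add ((hasSum_coe_mul_geometric_of_norm_lt_one hnorm).mul_left (h (-1)))
    convert this using 1
    · funext n
      ring
    · field_simp [sub_ne_zero.2 hθ.2.ne']
      linear_combination -hmean
  have := eq_zero_of_tsum_mul_pow_eq_zero_on_Ioo one_pos (fun θ hθ => (hseries θ hθ).summable)
    (fun θ hθ => (hseries θ hθ).tsum_eq)
  linarith [show h n + n * h (-1) = 0 from congrFun this n]

theorem isUEZeroLehmann_intCast : IsUEZeroLehmann fun x => (x : ℝ) := by
  intro θ hθ
  have hnorm : ‖θ‖ < 1 := by rw [Real.norm_of_nonneg hθ.1.le]; exact hθ.2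
  have hmean := hasSum_mul_lehmannP (h := fun x => (x : ℝ))
    (by simpa using hasSum_coe_mul_geometric_of_norm_lt_one hnorm)
  refine ⟨(summable_mul_lehmannP_iff hθ.2.ne).2 ?_, hmean.summable, ?_⟩
  · simpa using summable_pow_mul_geometric_of_norm_lt_one 2 hnorm
  · rw [hmean.tsum_eq]
    field_simp [sub_ne_zero.2 hθ.2.ne']
    push_cast
    ring

theorem IsUEZeroLehmann.apply_zero {χ : ℤ → ℝ} (hχ : IsUEZeroLehmann χ) : χ 0 = 0 := by
  simpa using apply_natCast_eq_of_tsum_mul_lehmannP_eq_zero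
    (fun θ hθ => (hχ θ hθ).2.1) (fun θ hθ => (hχ θ hθ).2.2) 0

theorem hasSum_ite_eq_zero_mul_lehmannP (hθ : θ ∈ Set.Ioo 0 1) (a b : ℝ) :
    HasSum (fun x : ℤ => (if x = 0 then b else a) * lehmannP θ x)
      (a + (b - a) * (1 - θ) ^ 2) := by
  have hgeom := ((hasSum_geometric_of_lt_one hθ.1.le hθ.2).mul_left a).add
    (hasSum_ite_eq 0 (b - a))
  convert hasSum_mul_lehmannP (h := fun x => if x = 0 then b else a) (s := a * (1 - θ)⁻¹ + (b - a))
    ?_ using 1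
  · rw [if_neg (by norm_num)]
    field_simp [sub_ne_zero.2 hθ.2.ne']
    ring
  · refine hgeom.congr_fun fun n => ?_
    obtain rfl | hn := eq_or_ne n 0
    · simp
    · simp [hn]

theorem apply_natCast_eq_apply_neg_one_of_tsum_mul_intCast_eq_zero {g : ℤ → ℝ}
    (hsq : ∀ θ ∈ Set.Ioo (0 : ℝ) 1, Summable fun x => g x ^ 2 * lehmannP θ x)
    (horth : ∀ θ ∈ Set.Ioo (0 : ℝ) 1, ∑' x, g x * x * lehmannP θ x = 0) {n : ℕ} (hn : n ≠ 0) :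
    g n = g (-1) := by
  have := apply_natCast_eq_of_tsum_mul_lehmannP_eq_zero (h := fun x => g x * x)
    (fun θ hθ => summable_mul_mul_of_summable_sq (lehmannP_nonneg hθ.1.le) (hsq θ hθ)
      (isUEZeroLehmann_intCast θ hθ).1) horth n
  push_cast at this
  exact mul_right_cancel₀ (Nat.cast_ne_zero.2 hn) (by linarith)

theorem tsum_mul_lehmannP_of_apply_natCast_eq (hθ : θ ∈ Set.Ioo 0 1) {g : ℤ → ℝ}
    (hg : ∀ n : ℕ, n ≠ 0 → g n = g (-1)) :
    ∑' x, g x * lehmannP θ x = g (-1) + (g 0 - g (-1)) * (1 - θ) ^ 2 := by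
  have hstep (x : ℤ) : g x * lehmannP θ x = (if x = 0 then g 0 else g (-1)) * lehmannP θ x := by
    obtain hx | rfl | rfl | hx := show x < -1 ∨ x = -1 ∨ x = 0 ∨ 0 < x by omega
    · simp [lehmannP_of_lt_neg_one θ hx]
    · simp
    · simp
    · lift x to ℕ using hx.le
      rw [if_neg hx.ne', hg x (by omega)]
  rw [tsum_congr hstep, (hasSum_ite_eq_zero_mul_lehmannP hθ _ _).tsum_eq]

theorem IsUEZeroLehmann.tsum_ite_eq_zero_mul_mul_lehmannP {χ : ℤ → ℝ} (hχ : IsUEZeroLehmann χ)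
    (hθ : θ ∈ Set.Ioo 0 1) (a b : ℝ) :
    ∑' x, (if x = 0 then b else a) * χ x * lehmannP θ x = 0 := by
  have (x : ℤ) : (if x = 0 then b else a) * χ x * lehmannP θ x = a * (χ x * lehmannP θ x) := by
    split_ifs with hx
    · simp [hx, hχ.apply_zero]
    · ring
  rw [tsum_congr this, tsum_mul_left, (hχ θ hθ).2.2, mul_zero]

end Lehmann

theorem stmt13 (G : ℝ → ℝ) :
    (∃ g : ℤ → ℝ,
        (∀ θ ∈ Set.Ioo (0 : ℝ) 1, Summable (fun x : ℤ => (g x) ^ 2 * lehmannP θ x)) ∧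
        (∀ χ : ℤ → ℝ, IsUEZeroLehmann χ →
          ∀ θ ∈ Set.Ioo (0 : ℝ) 1, ∑' x : ℤ, g x * χ x * lehmannP θ x = 0) ∧
        (∀ θ ∈ Set.Ioo (0 : ℝ) 1,
          Summable (fun x : ℤ => g x * lehmannP θ x) ∧
          ∑' x : ℤ, g x * lehmannP θ x = G θ)) ↔
      ∃ c₁ c₂ : ℝ, ∀ θ ∈ Set.Ioo (0 : ℝ) 1, G θ = c₁ + c₂ * (1 - θ) ^ 2 := by
  constructor
  · rintro ⟨g, hsq, horth, hmean⟩
    have hconst (n : ℕ) (hn : n ≠ 0) : g n = g (-1) :=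
      apply_natCast_eq_apply_neg_one_of_tsum_mul_intCast_eq_zero hsq
        (horth _ isUEZeroLehmann_intCast) hn
    exact ⟨g (-1), g 0 - g (-1), fun θ hθ =>
      (hmean θ hθ).2.symm.trans (tsum_mul_lehmannP_of_apply_natCast_eq hθ hconst)⟩
  · rintro ⟨c₁, c₂, hG⟩
    refine ⟨fun x => if x = 0 then c₁ + c₂ else c₁, fun θ hθ => ?_,
      fun χ hχ θ hθ => hχ.tsum_ite_eq_zero_mul_mul_lehmannP hθ _ _, fun θ hθ => ?_⟩
    · simpa only [apply_ite (· ^ 2)] using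
        (hasSum_ite_eq_zero_mul_lehmannP hθ (c₁ ^ 2) ((c₁ + c₂) ^ 2)).summable
    · have hmean := hasSum_ite_eq_zero_mul_lehmannP hθ c₁ (c₁ + c₂)
      refine ⟨hmean.summable, ?_⟩
      rw [hmean.tsum_eq, hG θ hθ]
      ring
end
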